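/- arXiv:1409.4030 — 5 statements merged into one kernel-verified Lean document; each statement's English description precedes it below -/
import Mathlib

section
/- Let (X̂ₙ)ₙ∈ℕ and (X̃ₙ)ₙ∈ℕ be two sequences of X-valued random variables on a common probability space (Ω, F, P), let f : X → ℝ be a bounded measurable function, let α ∈ [0,1], and let τ : Ω → ℕ be an integrable random variable such that for every n ∈ ℕ, E[(f(X̂ₙ) − f(X̃ₙ)) · 1_{τ < n}] = 0. Then the series ∑ₙ αⁿ E[f(X̂ₙ) − f(X̃ₙ)] converges absolutely and |∑_{n=0}^{∞} αⁿ E[f(X̂ₙ) − f(X̃ₙ)]| ≤ 2 ‖f‖_∞ (E[τ] + 1), where ‖f‖_∞ = sup_x |f(x)|. -/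
open MeasureTheory Filter

/-!
Split `E[f(X̂ₙ) − f(X̃ₙ)]` along `{τ < n}`: that part integrates to zero by hypothesis, and the
integrand is bounded by `2C` on the rest, so the `n`-th term is at most `2C · P(τ ≥ n)`.
Since `τ` is `ℕ`-valued, `∑ₙ P(τ ≥ n) = E[τ] + 1`, which makes the series converge absolutely
with the stated bound.
-/

open Finset in
lemma sum_range_ite_le_le_add_one (k N : ℕ) :
    ∑ n ∈ range N, (if n ≤ k then (1 : ℝ) else 0) ≤ k + 1 := by
  rw [sum_boole]
  exact_mod_cast (card_le_card fun n hn => by simp at hn ⊢; omega).trans_eq (card_range (k + 1))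

section CouplingTime

variable {Ω : Type*} [MeasurableSpace Ω] {μ : Measure Ω} [IsFiniteMeasure μ]
  {τ : Ω → ℕ}

lemma abs_integral_le_of_integral_indicator_lt_eq_zero (hτ : Measurable τ)
    {g : Ω → ℝ} (hg : Integrable g μ) {M : ℝ} (hM : ∀ ω, |g ω| ≤ M) {n : ℕ}
    (hcouple : ∫ ω, {ω | τ ω < n}.indicator g ω ∂μ = 0) :
    |∫ ω, g ω ∂μ| ≤ M * μ.real {ω | n ≤ τ ω} := by
  have hs : MeasurableSet {ω | τ ω < n} := hτ measurableSet_Iio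
  have hcompl : {ω | τ ω < n}ᶜ = {ω | n ≤ τ ω} := by ext; simp
  have := norm_integral_sub_setIntegral_le (ae_of_all μ hM) hs hg
  rwa [← integral_indicator hs, hcouple, sub_zero, hcompl, mul_comm] at this

lemma sum_range_measureReal_le_le (hτ : Measurable τ)
    (hτi : Integrable (fun ω => (τ ω : ℝ)) μ) (N : ℕ) :
    ∑ n ∈ Finset.range N, μ.real {ω | n ≤ τ ω} ≤ ∫ ω, (τ ω : ℝ) ∂μ + μ.real Set.univ := by
  have hmeas (n : ℕ) : MeasurableSet {ω | n ≤ τ ω} := hτ measurableSet_Ici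
  have hint (n : ℕ) : Integrable ({ω | n ≤ τ ω}.indicator (1 : Ω → ℝ)) μ :=
    (integrable_const (1 : ℝ)).indicator (hmeas n)
  calc ∑ n ∈ Finset.range N, μ.real {ω | n ≤ τ ω}
      = ∫ ω, ∑ n ∈ Finset.range N, {ω | n ≤ τ ω}.indicator 1 ω ∂μ := by
        rw [integral_finsetSum _ fun n _ => hint n]
        simp only [integral_indicator_one (hmeas _)]
    _ ≤ ∫ ω, ((τ ω : ℝ) + 1) ∂μ := by
        refine integral_mono (integrable_finsetSum _ fun n _ => hint n)
          (hτi.add (integrable_const 1)) fun ω => ?_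
        simpa only [Set.indicator_apply, Set.mem_ofPred_eq, Pi.one_apply]
          using sum_range_ite_le_le_add_one (τ ω) N
    _ = ∫ ω, (τ ω : ℝ) ∂μ + μ.real Set.univ := by
        rw [integral_add hτi (integrable_const 1), integral_const, smul_eq_mul, mul_one]

lemma summable_measureReal_le (hτ : Measurable τ) (hτi : Integrable (fun ω => (τ ω : ℝ)) μ) :
    Summable fun n : ℕ => μ.real {ω | n ≤ τ ω} :=
  summable_of_sum_range_le (fun _ => measureReal_nonneg) (sum_range_measureReal_le_le hτ hτi)

lemma tsum_measureReal_le_le (hτ : Measurable τ) (hτi : Integrable (fun ω => (τ ω : ℝ)) μ) :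
    ∑' n : ℕ, μ.real {ω | n ≤ τ ω} ≤ ∫ ω, (τ ω : ℝ) ∂μ + μ.real Set.univ :=
  (summable_measureReal_le hτ hτi).tsum_le_of_sum_range_le (sum_range_measureReal_le_le hτ hτi)

end CouplingTime

/-- Coupling estimate: if two bounded-payoff sequences agree in expectation after an
integrable coupling time `τ`, then the discounted difference series converges absolutely
and is bounded by `2‖f‖_∞ (E[τ] + 1)`. -/
theorem coupling_discounted_bound
    {Ω : Type*} [MeasurableSpace Ω] (P : Measure Ω) [IsProbabilityMeasure P]
    {X : Type*} [MeasurableSpace X]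
    (Xhat Xtil : ℕ → Ω → X)
    (hXhat : ∀ n, Measurable (Xhat n)) (hXtil : ∀ n, Measurable (Xtil n))
    (f : X → ℝ) (hf : Measurable f) (C : ℝ) (hfC : ∀ x, |f x| ≤ C)
    (α : ℝ) (hα0 : 0 ≤ α) (hα1 : α ≤ 1)
    (τ : Ω → ℕ) (hτm : Measurable τ)
    (hτint : Integrable (fun ω => (τ ω : ℝ)) P)
    (hcouple : ∀ n : ℕ,
      ∫ ω, {ω' | τ ω' < n}.indicator (fun ω' => f (Xhat n ω') - f (Xtil n ω')) ω ∂P = 0) :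
    Summable (fun n : ℕ => |α ^ n * ∫ ω, (f (Xhat n ω) - f (Xtil n ω)) ∂P|) ∧
      |∑' n : ℕ, α ^ n * ∫ ω, (f (Xhat n ω) - f (Xtil n ω)) ∂P| ≤
        2 * C * ((∫ ω, (τ ω : ℝ) ∂P) + 1) := by
  obtain ⟨ω₀⟩ : Nonempty Ω := nonempty_of_isProbabilityMeasure P
  have hC : 0 ≤ 2 * C := by linarith [(abs_nonneg _).trans (hfC (Xhat 0 ω₀))]
  have hdiff (n : ℕ) (ω : Ω) : |f (Xhat n ω) - f (Xtil n ω)| ≤ 2 * C := by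
    linarith [abs_sub (f (Xhat n ω)) (f (Xtil n ω)), hfC (Xhat n ω), hfC (Xtil n ω)]
  have hterm (n : ℕ) : |α ^ n * ∫ ω, (f (Xhat n ω) - f (Xtil n ω)) ∂P| ≤
      2 * C * P.real {ω | n ≤ τ ω} := by
    have hint : Integrable (fun ω => f (Xhat n ω) - f (Xtil n ω)) P :=
      (integrable_const (2 * C)).mono'
        ((hf.comp (hXhat n)).sub (hf.comp (hXtil n))).aestronglyMeasurable (ae_of_all _ (hdiff n))
    rw [abs_mul, abs_of_nonneg (pow_nonneg hα0 n)]
    exact (mul_le_of_le_one_left (abs_nonneg _) (pow_le_one₀ hα0 hα1)).trans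
      (abs_integral_le_of_integral_indicator_lt_eq_zero hτm hint (hdiff n) (hcouple n))
  have hsum := (summable_measureReal_le hτm hτint).mul_left (2 * C)
  refine ⟨hsum.of_nonneg_of_le (fun _ => abs_nonneg _) hterm, ?_⟩
  calc |∑' n : ℕ, α ^ n * ∫ ω, (f (Xhat n ω) - f (Xtil n ω)) ∂P|
      ≤ ∑' n : ℕ, 2 * C * P.real {ω | n ≤ τ ω} := tsum_of_norm_bounded hsum.hasSum (E := ℝ) hterm
    _ = 2 * C * ∑' n : ℕ, P.real {ω | n ≤ τ ω} := tsum_mul_left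
    _ ≤ 2 * C * ((∫ ω, (τ ω : ℝ) ∂P) + 1) := by
        simpa using mul_le_mul_of_nonneg_left (tsum_measureReal_le_le hτm hτint) hC
end

section
/- Let (Ω, F, (Fₙ)ₙ∈ℕ, P) be a filtered probability space, X a measurable space, (Xₙ)ₙ∈ℕ an X-valued (Fₙ)-adapted process, K ⊆ X a measurable set, c ≥ 0 a constant, and let V : X → [0,∞) and h : X → ℝ be measurable with h(x) ≥ 1 for all x. Assume V(Xₙ) is integrable for every n and the drift condition holds: for every n ∈ ℕ, E[V(X_{n+1}) | Fₙ] ≤ V(Xₙ) − h(Xₙ) + c·1_K(Xₙ) almost surely. Let τ_K = inf{n ≥ 0 : Xₙ ∈ K} (with inf ∅ = ∞). Then E[τ_K] ≤ E[V(X₀)]; in particular τ_K is finite almost surely whenever E[V(X₀)] < ∞. -/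
open MeasureTheory Filter
open scoped ENNReal

/-!
Let `A n` be the event that `X` has not entered `K` up to time `n`, so that
`τ_K = ∑ₙ 1_{A n}` and `E[τ_K] = ∑ₙ P(A n)`. Since `A n ∈ ℱ n` and the drift is at most `-1`
off `K`, integrating the drift condition over `A n` gives
`E[V(X_{n+1}); A (n+1)] + P(A n) ≤ E[V(X_n); A n]`; telescoping and `V ≥ 0` bound the partial
sums of `∑ₙ P(A n)` by `E[V(X₀)]`.
-/

theorem iInf_natCast_eq_tsum_indicator (p : ℕ → Prop) :
    ⨅ (k : ℕ) (_ : p k), (k : ℝ≥0∞) = ∑' n, {n | ∀ k ≤ n, ¬ p k}.indicator 1 n := by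
  rw [← tsum_subtype, Pi.one_def, ENNReal.tsum_set_one]
  by_cases hp : ∃ k, p k
  · classical
    have hset : {n | ∀ k ≤ n, ¬ p k} = {n | n < Nat.find hp} := by
      ext n; simp [Nat.lt_find_iff]
    rw [hset, Set.Nat.encard_range, ENat.toENNReal_coe]
    exact le_antisymm (iInf₂_le _ (Nat.find_spec hp))
      (le_iInf₂ fun k hk => Nat.cast_le.2 (Nat.find_min' hp hk))
  · push Not at hp
    simp [hp]

section Drift

variable {Ω : Type*} {m0 : MeasurableSpace Ω} {P : Measure Ω} [IsFiniteMeasure P]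
  {ℱ : Filtration ℕ m0} {Y : ℕ → Ω → ℝ}

theorem setIntegral_succ_add_measureReal_le {n : ℕ} {s : Set Ω} (hs : MeasurableSet[ℱ n] s)
    (hYn : Integrable (Y n) P) (hYsucc : Integrable (Y (n + 1)) P)
    (hdrift : ∀ᵐ ω ∂P, ω ∈ s → P[Y (n + 1) | ℱ n] ω ≤ Y n ω - 1) :
    ∫ ω in s, Y (n + 1) ω ∂P + P.real s ≤ ∫ ω in s, Y n ω ∂P := by
  have hmono : ∫ ω in s, P[Y (n + 1) | ℱ n] ω ∂P ≤ ∫ ω in s, (Y n ω - 1) ∂P :=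
    setIntegral_mono_on_ae integrable_condExp.integrableOn (hYn.sub (integrable_const 1)).integrableOn
      (ℱ.le n s hs) hdrift
  rw [setIntegral_condExp (ℱ.le n) hYsucc hs,
    integral_sub hYn.integrableOn (integrable_const 1).integrableOn, setIntegral_const,
    smul_eq_mul, mul_one] at hmono
  linarith

variable {A : ℕ → Set Ω}

theorem sum_measureReal_add_setIntegral_le (hA : Antitone A)
    (hAm : ∀ n, MeasurableSet[ℱ n] (A n)) (hY0 : ∀ n ω, 0 ≤ Y n ω)
    (hint : ∀ n, Integrable (Y n) P)
    (hdrift : ∀ n, ∀ᵐ ω ∂P, ω ∈ A n → P[Y (n + 1) | ℱ n] ω ≤ Y n ω - 1) (N : ℕ) :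
    ∑ k ∈ Finset.range N, P.real (A k) + ∫ ω in A N, Y N ω ∂P ≤ ∫ ω in A 0, Y 0 ω ∂P := by
  induction N with
  | zero => simp
  | succ N ih =>
    have hshrink : ∫ ω in A (N + 1), Y (N + 1) ω ∂P ≤ ∫ ω in A N, Y (N + 1) ω ∂P :=
      setIntegral_mono_set (hint (N + 1)).integrableOn (ae_of_all _ (hY0 (N + 1)))
        (hA N.le_succ).eventuallyLE
    have hstep := setIntegral_succ_add_measureReal_le (hAm N) (hint N) (hint (N + 1)) (hdrift N)
    rw [Finset.sum_range_succ]
    linarith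

theorem tsum_measure_le_ofReal_integral (hA : Antitone A)
    (hAm : ∀ n, MeasurableSet[ℱ n] (A n)) (hY0 : ∀ n ω, 0 ≤ Y n ω)
    (hint : ∀ n, Integrable (Y n) P)
    (hdrift : ∀ n, ∀ᵐ ω ∂P, ω ∈ A n → P[Y (n + 1) | ℱ n] ω ≤ Y n ω - 1) :
    ∑' n, P (A n) ≤ ENNReal.ofReal (∫ ω, Y 0 ω ∂P) := by
  refine ENNReal.tsum_le_of_sum_range_le fun N => ?_
  have hsum := sum_measureReal_add_setIntegral_le hA hAm hY0 hint hdrift N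
  have hlast : 0 ≤ ∫ ω in A N, Y N ω ∂P := integral_nonneg (hY0 N)
  have hfirst : ∫ ω in A 0, Y 0 ω ∂P ≤ ∫ ω, Y 0 ω ∂P :=
    setIntegral_le_integral (hint 0) (ae_of_all _ (hY0 0))
  calc ∑ k ∈ Finset.range N, P (A k)
      = ENNReal.ofReal (∑ k ∈ Finset.range N, P.real (A k)) := by
        rw [ENNReal.ofReal_sum_of_nonneg fun _ _ => measureReal_nonneg]
        exact Finset.sum_congr rfl fun k _ => (ofReal_measureReal).symm
    _ ≤ ENNReal.ofReal (∫ ω, Y 0 ω ∂P) := ENNReal.ofReal_le_ofReal (by linarith)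

end Drift

theorem foster_lyapunov_hitting_time_bound_general
    {Ω : Type*} {m0 : MeasurableSpace Ω} {P : Measure Ω} [IsProbabilityMeasure P]
    (ℱ : Filtration ℕ m0)
    {S : Type*} [MeasurableSpace S]
    (X : ℕ → Ω → S) (hadapted : ∀ n, Measurable[ℱ n] (X n))
    (K : Set S) (hK : MeasurableSet K) (c : ℝ)
    (V : S → ℝ) (hV0 : ∀ s, 0 ≤ V s)
    (h : S → ℝ) (hh1 : ∀ s, 1 ≤ h s)
    (hint : ∀ n, Integrable (fun ω => V (X n ω)) P)
    (hdrift : ∀ n, P[fun ω => V (X (n + 1) ω) | ℱ n] ≤ᵐ[P]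
      fun ω => V (X n ω) - h (X n ω) + c * K.indicator 1 (X n ω)) :
    (∫⁻ ω, (⨅ (n : ℕ) (_ : X n ω ∈ K), (n : ℝ≥0∞)) ∂P ≤
        ENNReal.ofReal (∫ ω, V (X 0 ω) ∂P)) ∧
      ∀ᵐ ω ∂P, (⨅ (n : ℕ) (_ : X n ω ∈ K), (n : ℝ≥0∞)) < ⊤ := by
  set A : ℕ → Set Ω := fun n => {ω | ∀ k ≤ n, X k ω ∉ K}
  have hAm : ∀ n, MeasurableSet[ℱ n] (A n) := fun n => by
    simp only [A, Set.ofPred_forall]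
    exact MeasurableSet.iInter fun k => MeasurableSet.iInter fun hk =>
      (hadapted k).mono (ℱ.mono hk) le_rfl hK.compl
  have hAdrift : ∀ n, ∀ᵐ ω ∂P, ω ∈ A n →
      P[fun ω => V (X (n + 1) ω) | ℱ n] ω ≤ V (X n ω) - 1 := fun n => by
    filter_upwards [hdrift n] with ω hω hωA
    rw [Set.indicator_of_notMem (hωA n le_rfl), mul_zero, add_zero] at hω
    linarith [hh1 (X n ω)]
  have hsum := tsum_measure_le_ofReal_integral
    (show Antitone A from fun _ _ hmn _ hω k hk => hω k (hk.trans hmn))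
    hAm (fun n ω => hV0 (X n ω)) hint hAdrift
  have hτ : ∀ ω, ⨅ (n : ℕ) (_ : X n ω ∈ K), (n : ℝ≥0∞) = ∑' n, (A n).indicator 1 ω :=
    fun ω => iInf_natCast_eq_tsum_indicator _
  have hAm0 : ∀ n, MeasurableSet (A n) := fun n => ℱ.le n _ (hAm n)
  have hbound : ∫⁻ ω, ∑' n, (A n).indicator 1 ω ∂P ≤ ENNReal.ofReal (∫ ω, V (X 0 ω) ∂P) := by
    rwa [lintegral_tsum fun n => (measurable_one.indicator (hAm0 n)).aemeasurable,
      tsum_congr fun n => lintegral_indicator_one (hAm0 n)]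
  simp only [hτ]
  exact ⟨hbound, ae_lt_top (Measurable.tsum fun n => measurable_one.indicator (hAm0 n))
    (hbound.trans_lt ENNReal.ofReal_lt_top).ne⟩

/-- Foster–Lyapunov hitting-time bound: under the drift condition
`E[V(X_{n+1}) | Fₙ] ≤ V(Xₙ) − h(Xₙ) + c·1_K(Xₙ)` with `h ≥ 1` and `V ≥ 0`,
the hitting time `τ_K = inf {n : Xₙ ∈ K}` (with `inf ∅ = ∞`) satisfies
`E[τ_K] ≤ E[V(X₀)]`; in particular it is a.s. finite. -/
theorem foster_lyapunov_hitting_time_bound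
    {Ω : Type*} {m0 : MeasurableSpace Ω} {P : Measure Ω} [IsProbabilityMeasure P]
    (ℱ : Filtration ℕ m0)
    {S : Type*} [MeasurableSpace S]
    (X : ℕ → Ω → S) (hadapted : ∀ n, Measurable[ℱ n] (X n))
    (K : Set S) (hK : MeasurableSet K) (c : ℝ) (hc : 0 ≤ c)
    (V : S → ℝ) (hV : Measurable V) (hV0 : ∀ s, 0 ≤ V s)
    (h : S → ℝ) (hh : Measurable h) (hh1 : ∀ s, 1 ≤ h s)
    (hint : ∀ n, Integrable (fun ω => V (X n ω)) P)
    (hdrift : ∀ n, P[fun ω => V (X (n + 1) ω) | ℱ n] ≤ᵐ[P]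
      fun ω => V (X n ω) - h (X n ω) + c * K.indicator 1 (X n ω)) :
    (∫⁻ ω, (⨅ (n : ℕ) (_ : X n ω ∈ K), (n : ℝ≥0∞)) ∂P ≤
        ENNReal.ofReal (∫ ω, V (X 0 ω) ∂P)) ∧
      ∀ᵐ ω ∂P, (⨅ (n : ℕ) (_ : X n ω ∈ K), (n : ℝ≥0∞)) < ⊤ :=
  foster_lyapunov_hitting_time_bound_general ℱ X hadapted K hK c V hV0 h hh1 hint hdrift
end

section
/- Let S be a standard Borel space, κ a Markov kernel from S to S, μ a probability measure on S, and let ℙ be the law on S^ℕ of the time-homogeneous Markov chain with initial distribution μ and transition kernel κ (given by the Ionescu–Tulcea construction), with Xₙ : S^ℕ → S the n-th coordinate map. Let c : S → ℝ be bounded measurable, γ ∈ ℝ, and let W : S → ℝ be a measurable function such that W is integrable with respect to κ(s) for every s ∈ S and W(Xₙ) is ℙ-integrable for every n. Assume the dynamic programming inequality W(s) + γ ≤ c(s) + ∫_S W(s') κ(s)(ds') holds for all s ∈ S, and that E[W(Xₙ)]/n → 0 as n → ∞. Then γ ≤ liminf_{n→∞} (1/n) ∑_{k=0}^{n−1} E[c(X_k)].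 -/
/-!
Let `νₙ` be the law of `Xₙ`. The Markov property gives `νₙ₊₁ = κ ∘ₘ νₙ`, so integrating
the dynamic programming inequality against `νₙ` yields
`E W(Xₙ) + γ ≤ E c(Xₙ) + E W(Xₙ₊₁)`. Telescoping,
`n γ ≤ ∑_{k<n} E c(X_k) + E W(Xₙ) - E W(X₀)`, and after dividing by `n` the `W`-terms
vanish in the limit.
-/

open MeasureTheory ProbabilityTheory Filter Topology

section Comp

variable {α β : Type*} {mα : MeasurableSpace α} {mβ : MeasurableSpace β}
  {μ : Measure α} {κ : Kernel α β} {f : β → ℝ}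

lemma integral_comp_eq_integral_integral (hf : Integrable f (κ ∘ₘ μ)) :
    ∫ y, f y ∂(κ ∘ₘ μ) = ∫ x, ∫ y, f y ∂κ x ∂μ := by
  rw [Measure.comp_eq_comp_const_apply] at hf ⊢
  exact Kernel.integral_comp hf

lemma integrable_integral_of_integrable_comp (hf : Integrable f (κ ∘ₘ μ)) :
    Integrable (fun x ↦ ∫ y, f y ∂κ x) μ := by
  rw [Measure.comp_eq_comp_const_apply] at hf
  exact hf.integral_comp

end Comp

theorem map_eq_comp_map_of_condExp_indicator {Ω S : Type*} {m mΩ : MeasurableSpace Ω}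
    [MeasurableSpace S] {P : Measure Ω} [IsFiniteMeasure P] (hm : m ≤ mΩ) {X Y : Ω → S}
    (hX : Measurable X) (hY : Measurable Y) (κ : Kernel S S) [IsFiniteKernel κ]
    (h : ∀ A, MeasurableSet A →
      P[fun ω => A.indicator (fun _ => (1 : ℝ)) (Y ω) | m]
        =ᵐ[P] fun ω => (κ (X ω) A).toReal) :
    P.map Y = κ ∘ₘ P.map X := by
  ext A hA
  have hκA : Measurable fun s => κ s A := κ.measurable_coe hA
  have key : (P.map Y A).toReal = ((κ ∘ₘ P.map X) A).toReal := calc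
    (P.map Y A).toReal = ∫ ω, A.indicator (fun _ => (1 : ℝ)) (Y ω) ∂P := by
      rw [Measure.map_apply hY hA, ← measureReal_def, ← integral_indicator_one (hY hA)]
      rfl
    _ = ∫ ω, (κ (X ω) A).toReal ∂P := by
      rw [← integral_condExp hm, integral_congr_ae (h A hA)]
    _ = ((κ ∘ₘ P.map X) A).toReal := by
      rw [Measure.bind_apply hA κ.aemeasurable, lintegral_map hκA hX]
      exact integral_toReal (hκA.comp hX).aemeasurable (ae_of_all _ fun _ => measure_lt_top _ _)
  exact (ENNReal.toReal_eq_toReal_iff' (measure_ne_top _ _) (measure_ne_top _ _)).1 key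

theorem integral_add_le_integral_add_integral_comp {α : Type*} [MeasurableSpace α]
    {ν : Measure α} [IsProbabilityMeasure ν] {κ : Kernel α α} {c W : α → ℝ} {γ : ℝ}
    (hc : Integrable c ν) (hW : Integrable W ν) (hWκν : Integrable W (κ ∘ₘ ν))
    (hdp : ∀ s, W s + γ ≤ c s + ∫ t, W t ∂κ s) :
    ∫ s, W s ∂ν + γ ≤ ∫ s, c s ∂ν + ∫ s, W s ∂(κ ∘ₘ ν) := by
  have hWκ := integrable_integral_of_integrable_comp hWκν
  calc ∫ s, W s ∂ν + γ = ∫ s, (W s + γ) ∂ν := by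
        rw [integral_add hW (integrable_const γ), integral_const, probReal_univ, one_smul]
    _ ≤ ∫ s, (c s + ∫ t, W t ∂κ s) ∂ν :=
        integral_mono (hW.add (integrable_const γ)) (hc.add hWκ) hdp
    _ = ∫ s, c s ∂ν + ∫ s, W s ∂(κ ∘ₘ ν) := by
        rw [integral_add hc hWκ, integral_comp_eq_integral_integral hWκν]

section Average

variable {a c : ℕ → ℝ} {γ M : ℝ}

theorem add_mul_le_sum_add_of_add_le (hstep : ∀ n, a n + γ ≤ c n + a (n + 1)) (n : ℕ) :
    a 0 + n * γ ≤ ∑ k ∈ Finset.range n, c k + a n := by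
  induction n with
  | zero => simp
  | succ n ih =>
    rw [Finset.sum_range_succ]
    push_cast
    linarith [hstep n]

theorem average_le_of_forall_le (hc : ∀ n, c n ≤ M) {n : ℕ} (hn : 1 ≤ n) :
    1 / (n : ℝ) * ∑ k ∈ Finset.range n, c k ≤ M := by
  have hn' : (0 : ℝ) < n := by exact_mod_cast hn
  have hsum : ∑ k ∈ Finset.range n, c k ≤ n * M := by
    simpa using Finset.sum_le_card_nsmul (Finset.range n) c M fun k _ => hc k
  rw [one_div_mul_eq_div, div_le_iff₀ hn']
  linarith

theorem le_liminf_average_of_add_le (hstep : ∀ n, a n + γ ≤ c n + a (n + 1))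
    (ha : Tendsto (fun n : ℕ => a n / n) atTop (𝓝 0)) (hc : ∀ n, c n ≤ M) :
    γ ≤ liminf (fun n : ℕ => 1 / (n : ℝ) * ∑ k ∈ Finset.range n, c k) atTop := by
  set lower : ℕ → ℝ := fun n => γ - (a n - a 0) / n
  have hlower : Tendsto lower atTop (𝓝 γ) := by
    have ha0 : Tendsto (fun n : ℕ => a 0 / n) atTop (𝓝 0) :=
      tendsto_const_nhds.div_atTop tendsto_natCast_atTop_atTop
    simpa [lower, sub_div] using tendsto_const_nhds.sub (ha.sub ha0)
  have hle : ∀ᶠ n in atTop, lower n ≤ 1 / (n : ℝ) * ∑ k ∈ Finset.range n, c k := by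
    filter_upwards [eventually_ge_atTop 1] with n hn
    have hn' : (0 : ℝ) < n := by exact_mod_cast hn
    rw [one_div_mul_eq_div, le_div_iff₀ hn', sub_mul, div_mul_cancel₀ _ hn'.ne']
    linarith [add_mul_le_sum_add_of_add_le hstep n]
  rw [← hlower.liminf_eq]
  refine liminf_le_liminf hle hlower.isBoundedUnder_ge ?_
  exact (isBoundedUnder_of_eventually_le
    ((eventually_ge_atTop 1).mono fun n hn => average_le_of_forall_le hc hn)).isCoboundedUnder_ge

end Average

theorem verification_lower_bound_general
    {S : Type*} [MeasurableSpace S]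
    (κ : Kernel S S) [IsMarkovKernel κ]
    (Plaw : Measure (ℕ → S)) [IsProbabilityMeasure Plaw]
    (hMarkov : ∀ (n : ℕ) (A : Set S), MeasurableSet A →
      Plaw[fun ω => A.indicator (fun _ => (1 : ℝ)) (ω (n + 1)) |
          MeasurableSpace.comap (fun (ω : ℕ → S) (k : Fin (n + 1)) => ω k) inferInstance]
        =ᵐ[Plaw] fun ω => (κ (ω n) A).toReal)
    (c : S → ℝ) (hc : Measurable c) (M : ℝ) (hcb : ∀ s, |c s| ≤ M)
    (γ : ℝ) (W : S → ℝ) (hW : Measurable W)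
    (hWn : ∀ n : ℕ, Integrable (fun ω => W (ω n)) Plaw)
    (hdp : ∀ s, W s + γ ≤ c s + ∫ s', W s' ∂(κ s))
    (hWlim : Tendsto (fun n : ℕ => (∫ ω, W (ω n) ∂Plaw) / n) atTop (nhds 0)) :
    γ ≤ liminf (fun n : ℕ => (1 / (n : ℝ)) * ∑ k ∈ Finset.range n, ∫ ω, c (ω k) ∂Plaw)
        atTop := by
  have hX (n : ℕ) : Measurable fun ω : ℕ → S => ω n := measurable_pi_apply n
  have hlaw (n : ℕ) : Plaw.map (· (n + 1)) = κ ∘ₘ Plaw.map (· n) :=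
    map_eq_comp_map_of_condExp_indicator
      (measurable_pi_lambda _ fun k => measurable_pi_apply _).comap_le (hX n) (hX (n + 1)) κ
      (hMarkov n)
  have hν (n : ℕ) : IsProbabilityMeasure (Plaw.map (· n)) :=
    Measure.isProbabilityMeasure_map (hX n).aemeasurable
  have hcν (n : ℕ) : Integrable c (Plaw.map (· n)) :=
    have := hν n
    .of_bound hc.aestronglyMeasurable M (ae_of_all _ hcb)
  have hWν (n : ℕ) : Integrable W (Plaw.map (· n)) :=
    (integrable_map_measure hW.aestronglyMeasurable (hX n).aemeasurable).2 (hWn n)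
  have hmarg {f : S → ℝ} (hf : Measurable f) (n : ℕ) :
      ∫ ω, f (ω n) ∂Plaw = ∫ s, f s ∂(Plaw.map (· n)) :=
    (integral_map (hX n).aemeasurable hf.aestronglyMeasurable).symm
  refine le_liminf_average_of_add_le (fun n => ?_) hWlim (M := M) fun n => ?_
  · have := hν n
    have h := integral_add_le_integral_add_integral_comp (hcν n) (hWν n)
      (hlaw n ▸ hWν (n + 1)) hdp
    rwa [← hlaw n, ← hmarg hW, ← hmarg hW, ← hmarg hc] at h
  · calc ∫ ω, c (ω n) ∂Plaw ≤ ‖∫ ω, c (ω n) ∂Plaw‖ := le_abs_self _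
      _ ≤ M * Plaw.real Set.univ :=
        norm_integral_le_of_norm_le_const (ae_of_all _ fun ω => hcb (ω n))
      _ = M := by simp

/-- Verification theorem (lower bound): let `Plaw` on `S^ℕ` be the law of the
time-homogeneous Markov chain with initial distribution `μ` and transition kernel `κ`
(characterized by its initial law and the Markov property given by the Ionescu–Tulcea
construction), with coordinate process `Xₙ(ω) = ω n`. If a measurable `W`, integrable
w.r.t. each `κ s` and along the chain, satisfies the dynamic programming inequality
`W(s) + γ ≤ c(s) + ∫ W dκ(s)` for all `s`, with `c` bounded measurable, and
`E[W(Xₙ)]/n → 0`, then `γ ≤ liminfₙ (1/n) ∑_{k<n} E[c(X_k)]`. -/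
theorem verification_lower_bound
    {S : Type*} [MeasurableSpace S] [StandardBorelSpace S]
    (κ : Kernel S S) [IsMarkovKernel κ]
    (μ : Measure S) [IsProbabilityMeasure μ]
    (Plaw : Measure (ℕ → S)) [IsProbabilityMeasure Plaw]
    (hinit : Plaw.map (fun ω => ω 0) = μ)
    (hMarkov : ∀ (n : ℕ) (A : Set S), MeasurableSet A →
      Plaw[fun ω => A.indicator (fun _ => (1 : ℝ)) (ω (n + 1)) |
          MeasurableSpace.comap (fun (ω : ℕ → S) (k : Fin (n + 1)) => ω k) inferInstance]
        =ᵐ[Plaw] fun ω => (κ (ω n) A).toReal)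
    (c : S → ℝ) (hc : Measurable c) (M : ℝ) (hcb : ∀ s, |c s| ≤ M)
    (γ : ℝ) (W : S → ℝ) (hW : Measurable W)
    (hWκ : ∀ s, Integrable W (κ s))
    (hWn : ∀ n : ℕ, Integrable (fun ω => W (ω n)) Plaw)
    (hdp : ∀ s, W s + γ ≤ c s + ∫ s', W s' ∂(κ s))
    (hWlim : Tendsto (fun n : ℕ => (∫ ω, W (ω n) ∂Plaw) / n) atTop (nhds 0)) :
    γ ≤ liminf (fun n : ℕ => (1 / (n : ℝ)) * ∑ k ∈ Finset.range n, ∫ ω, c (ω k) ∂Plaw)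
        atTop :=
  verification_lower_bound_general κ Plaw hMarkov c hc M hcb γ W hW hWn hdp hWlim
end

section
/- Let A and B be nonempty compact metric spaces, let (Fₙ)ₙ∈ℕ be a sequence of continuous functions Fₙ : A × B → ℝ that is uniformly bounded, and let F : A × B → ℝ be a function such that for every b ∈ B, every a ∈ A and every sequence (aₙ) in A with aₙ → a, limsup_{n→∞} Fₙ(aₙ, b) ≤ F(a, b). Then limsup_{n→∞} sup_{a∈A} inf_{b∈B} Fₙ(a, b) ≤ sup_{a∈A} inf_{b∈B} F(a, b). -/
open Filter Topology

/-!
Take exact maximizers `xₙ` of the upper semicontinuous functions `a ↦ inf_b Fₙ(a, b)` and a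
subsequence along which the max–min values tend to their limsup `L` and `xₙ → a`. For each `b`
these values are at most `Fₙ(xₙ, b)`, so `L` is bounded by the limsup of `Fₙ(xₙ, b)` along
the subsequence; that is `≤ G(a, b)` by the hypothesis, applied to the sequence equal to `xₙ`
on the subsequence and to `a` off it.
-/

theorem UpperSemicontinuous.exists_iSup_eq {X δ : Type*} [TopologicalSpace X] [CompactSpace X]
    [Nonempty X] [CompleteLinearOrder δ] {g : X → δ} (hg : UpperSemicontinuous g) :
    ∃ x, ⨆ y, g y = g x := by
  obtain ⟨x, -, hx⟩ :=
    (hg.upperSemicontinuousOn _).exists_isMaxOn Set.univ_nonempty isCompact_univ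
  exact ⟨x, le_antisymm (iSup_le fun y => hx (Set.mem_univ y)) (le_iSup g x)⟩

open Classical in
theorem tendsto_ite_mem_range_of_tendsto_comp {X : Type*} [TopologicalSpace X] {x : ℕ → X}
    {ρ : ℕ → ℕ} {a : X} (hx : Tendsto (x ∘ ρ) atTop (𝓝 a)) :
    Tendsto (fun n => if n ∈ Set.range ρ then x n else a) atTop (𝓝 a) := by
  intro U hU
  obtain ⟨K, hK⟩ := eventually_atTop.1 (hx hU)
  refine eventually_atTop.2 ⟨(Finset.range K).sup ρ + 1, fun n hn => ?_⟩
  dsimp only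
  split_ifs with h
  · obtain ⟨k, rfl⟩ := h
    refine hK k (not_lt.1 fun hk => ?_)
    have := Finset.le_sup (f := ρ) (Finset.mem_range.2 hk)
    omega
  · exact mem_of_mem_nhds hU

open Classical in
theorem limsup_comp_le_of_forall_tendsto {X α : Type*} [TopologicalSpace X] [CompleteLattice α]
    {f : ℕ → X → α} {a : X} {c : α}
    (h : ∀ x : ℕ → X, Tendsto x atTop (𝓝 a) → limsup (fun n => f n (x n)) atTop ≤ c)
    {x : ℕ → X} {ρ : ℕ → ℕ} (hρ : Tendsto ρ atTop atTop)
    (hx : Tendsto (x ∘ ρ) atTop (𝓝 a)) :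
    limsup (fun k => f (ρ k) (x (ρ k))) atTop ≤ c := by
  set y : ℕ → X := fun n => if n ∈ Set.range ρ then x n else a
  have hy : ∀ k, y (ρ k) = x (ρ k) := fun k => if_pos ⟨k, rfl⟩
  calc limsup (fun k => f (ρ k) (x (ρ k))) atTop
      = limsup ((fun n => f n (y n)) ∘ ρ) atTop := by simp only [Function.comp_def, hy]
    _ ≤ limsup (fun n => f n (y n)) atTop := hρ.limsup_comp_le_limsup
    _ ≤ c := h y (tendsto_ite_mem_range_of_tendsto_comp hx)

theorem EReal.coe_limsup_of_abs_le {ι : Type*} {l : Filter ι} [l.NeBot] {u : ι → ℝ} {M : ℝ}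
    (hu : ∀ i, |u i| ≤ M) :
    ((limsup u l : ℝ) : EReal) = limsup (fun i => (u i : EReal)) l :=
  EReal.coe_strictMono.monotone.map_limsup_of_continuousAt u continuous_coe_real_ereal.continuousAt
    (isBoundedUnder_of ⟨M, fun i => (abs_le.1 (hu i)).2⟩)
    (isCoboundedUnder_le_of_le l fun i => (abs_le.1 (hu i)).1)

theorem limsup_supInf_le_supInf_general
    {A B : Type*} [MetricSpace A] [CompactSpace A] [Nonempty A]
    [MetricSpace B]
    (F : ℕ → A × B → ℝ) (hFc : ∀ n, Continuous (F n))
    (M : ℝ) (hFb : ∀ n p, |F n p| ≤ M)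
    (G : A × B → ℝ)
    (hlim : ∀ (b : B) (a : A) (as : ℕ → A), Tendsto as atTop (nhds a) →
      limsup (fun n => F n (as n, b)) atTop ≤ G (a, b)) :
    limsup (fun n => ⨆ a : A, ⨅ b : B, (F n (a, b) : EReal)) atTop ≤
      ⨆ a : A, ⨅ b : B, (G (a, b) : EReal) := by
  have hlimE : ∀ b a (as : ℕ → A), Tendsto as atTop (𝓝 a) →
      limsup (fun n => (F n (as n, b) : EReal)) atTop ≤ G (a, b) := fun b a as has => by
    rw [← EReal.coe_limsup_of_abs_le fun n => hFb n (as n, b)]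
    exact_mod_cast hlim b a as has
  choose x hx using fun n => (upperSemicontinuous_iInf (f := fun b a => (F n (a, b) : EReal))
    fun b => (continuous_coe_real_ereal.comp ((hFc n).comp (.prodMk_left b))).upperSemicontinuous
    ).exists_iSup_eq
  obtain ⟨φ, hφL, hφ⟩ := exists_seq_tendsto_limsup (f := atTop)
    (u := fun n => ⨆ a : A, ⨅ b : B, (F n (a, b) : EReal))
  obtain ⟨a, ψ, hψ, hxa⟩ := CompactSpace.tendsto_subseq (x ∘ φ)
  refine le_iSup_of_le a (le_iInf fun b => ?_)
  calc limsup (fun n => ⨆ a : A, ⨅ b : B, (F n (a, b) : EReal)) atTop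
      = limsup (fun k => ⨆ a : A, ⨅ b : B, (F (φ (ψ k)) (a, b) : EReal)) atTop :=
        (hφL.comp hψ.tendsto_atTop).limsup_eq.symm
    _ ≤ limsup (fun k => (F (φ (ψ k)) (x (φ (ψ k)), b) : EReal)) atTop :=
        limsup_le_limsup (.of_forall fun k => (hx _).trans_le (iInf_le _ b))
    _ ≤ G (a, b) := limsup_comp_le_of_forall_tendsto (f := fun n y => (F n (y, b) : EReal))
        (hlimE b a) (hφ.comp hψ.tendsto_atTop) hxa

/-- Abstract limsup interchange for max–min values: if `(Fₙ)` is a uniformly bounded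
sequence of continuous functions on the product of nonempty compact metric spaces
`A × B` such that `limsupₙ Fₙ(aₙ, b) ≤ F(a, b)` whenever `aₙ → a`, then
`limsupₙ sup_a inf_b Fₙ(a,b) ≤ sup_a inf_b F(a,b)`. -/
theorem limsup_supInf_le_supInf
    {A B : Type*} [MetricSpace A] [CompactSpace A] [Nonempty A]
    [MetricSpace B] [CompactSpace B] [Nonempty B]
    (F : ℕ → A × B → ℝ) (hFc : ∀ n, Continuous (F n))
    (M : ℝ) (hFb : ∀ n p, |F n p| ≤ M)
    (G : A × B → ℝ)
    (hlim : ∀ (b : B) (a : A) (as : ℕ → A), Tendsto as atTop (nhds a) →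
      limsup (fun n => F n (as n, b)) atTop ≤ G (a, b)) :
    limsup (fun n => ⨆ a : A, ⨅ b : B, (F n (a, b) : EReal)) atTop ≤
      ⨆ a : A, ⨅ b : B, (G (a, b) : EReal) :=
  limsup_supInf_le_supInf_general F hFc M hFb G hlim
end

section
/- Let A and B be nonempty compact metric spaces, let (Fₙ)ₙ∈ℕ be a sequence of continuous functions Fₙ : A × B → ℝ that is uniformly bounded, and let F : A × B → ℝ be a function such that for every a ∈ A, every b ∈ B and every sequence (bₙ) in B with bₙ → b, liminf_{n→∞} Fₙ(a, bₙ) ≥ F(a, b). Then liminf_{n→∞} inf_{b∈B} sup_{a∈A} Fₙ(a, b) ≥ inf_{b∈B} sup_{a∈A} F(a, b). -/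
open Filter Topology Function

/-! If the min–max values of `Fₙ` stayed frequently below a real `c < inf_b sup_a G`, we could pick
`bₙ` with `Fₙ(·, bₙ) < c` along a subsequence and, by compactness of `B`, a further subsequence
with `bₙ → b*`. Extended by `b*` off that subsequence this is a sequence converging to `b*` along
which `Fₙ(a, ·) < c` infinitely often, so the liminf hypothesis gives `G(a, b*) ≤ c` for every
`a`, i.e. `inf_b sup_a G ≤ c`. -/

theorem tendsto_extend_const_atTop {X : Type*} [TopologicalSpace X] {e : ℕ → ℕ}
    (he : StrictMono e) {u : ℕ → X} {x : X} (hu : Tendsto u atTop (𝓝 x)) :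
    Tendsto (extend e u fun _ => x) atTop (𝓝 x) := by
  intro s hs
  obtain ⟨K, hK⟩ := eventually_atTop.1 (hu hs)
  refine eventually_atTop.2 ⟨e K, fun n hn => ?_⟩
  by_cases hn_range : ∃ k, e k = n
  · obtain ⟨k, rfl⟩ := hn_range
    rw [he.injective.extend_apply]
    exact hK k (he.le_iff_le.1 hn)
  · rw [extend_apply' _ _ _ hn_range]
    exact mem_of_mem_nhds hs

theorem exists_tendsto_frequently_of_frequently_exists {X : Type*} [TopologicalSpace X]
    [SeqCompactSpace X] {P : ℕ → X → Prop} (h : ∃ᶠ n in atTop, ∃ x, P n x) :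
    ∃ (x : X) (v : ℕ → X), Tendsto v atTop (𝓝 x) ∧ ∃ᶠ n in atTop, P n (v n) := by
  obtain ⟨φ, hφ, hφP⟩ := extraction_of_frequently_atTop h
  choose u hu using hφP
  obtain ⟨x, ψ, hψ, hux⟩ := SeqCompactSpace.tendsto_subseq u
  have he : StrictMono (φ ∘ ψ) := hφ.comp hψ
  refine ⟨x, extend (φ ∘ ψ) (u ∘ ψ) fun _ => x, tendsto_extend_const_atTop he hux, ?_⟩
  refine he.tendsto_atTop.frequently (Frequently.of_forall fun k => ?_)
  rw [he.injective.extend_apply]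
  exact hu (ψ k)

theorem iInf_iSup_le_of_frequently_iInf_iSup_lt {A B : Type*} [TopologicalSpace B]
    [SeqCompactSpace B] (F : ℕ → A × B → ℝ) (M : ℝ) (hFb : ∀ n p, -M ≤ F n p)
    (G : A × B → ℝ)
    (hlim : ∀ (a : A) (b : B) (bs : ℕ → B), Tendsto bs atTop (𝓝 b) →
      G (a, b) ≤ liminf (fun n => F n (a, bs n)) atTop)
    {c : ℝ} (hc : ∃ᶠ n in atTop, (⨅ b : B, ⨆ a : A, (F n (a, b) : EReal)) < c) :
    (⨅ b : B, ⨆ a : A, (G (a, b) : EReal)) ≤ c := by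
  have hc' : ∃ᶠ n in atTop, ∃ b, ∀ a, F n (a, b) < c := hc.mono fun n hn => by
    obtain ⟨b, hb⟩ := iInf_lt_iff.1 hn
    exact ⟨b, fun a => EReal.coe_lt_coe_iff.1 ((le_iSup _ a).trans_lt hb)⟩
  obtain ⟨b, bs, hbs, hlt⟩ := exists_tendsto_frequently_of_frequently_exists hc'
  refine (iInf_le _ b).trans (iSup_le fun a => EReal.coe_le_coe_iff.2 ?_)
  calc G (a, b) ≤ liminf (fun n => F n (a, bs n)) atTop := hlim a b bs hbs
    _ ≤ c := liminf_le_of_frequently_le (hlt.mono fun n hn => (hn a).le)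
        (isBoundedUnder_of ⟨-M, fun n => hFb n _⟩)

theorem infSup_le_liminf_infSup_general
    {A B : Type*}
    [MetricSpace B] [CompactSpace B]
    (F : ℕ → A × B → ℝ)
    (M : ℝ) (hFb : ∀ n p, |F n p| ≤ M)
    (G : A × B → ℝ)
    (hlim : ∀ (a : A) (b : B) (bs : ℕ → B), Tendsto bs atTop (nhds b) →
      G (a, b) ≤ liminf (fun n => F n (a, bs n)) atTop) :
    (⨅ b : B, ⨆ a : A, (G (a, b) : EReal)) ≤
      liminf (fun n => ⨅ b : B, ⨆ a : A, (F n (a, b) : EReal)) atTop := by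
  by_contra! h
  obtain ⟨c, hliminf_lt, hlt_infSup⟩ := EReal.exists_between_coe_real h
  have hfreq := frequently_lt_of_liminf_lt (by isBoundedDefault) hliminf_lt
  exact hlt_infSup.not_ge <| iInf_iSup_le_of_frequently_iInf_iSup_lt F M
    (fun n p => neg_le_of_abs_le (hFb n p)) G hlim hfreq

/-- Abstract liminf interchange for min–max values: if `(Fₙ)` is a uniformly bounded
sequence of continuous functions on the product of nonempty compact metric spaces
`A × B` such that `liminfₙ Fₙ(a, bₙ) ≥ F(a, b)` whenever `bₙ → b`, then
`liminfₙ inf_b sup_a Fₙ(a,b) ≥ inf_b sup_a F(a,b)`. -/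
theorem infSup_le_liminf_infSup
    {A B : Type*} [MetricSpace A] [CompactSpace A] [Nonempty A]
    [MetricSpace B] [CompactSpace B] [Nonempty B]
    (F : ℕ → A × B → ℝ) (hFc : ∀ n, Continuous (F n))
    (M : ℝ) (hFb : ∀ n p, |F n p| ≤ M)
    (G : A × B → ℝ)
    (hlim : ∀ (a : A) (b : B) (bs : ℕ → B), Tendsto bs atTop (nhds b) →
      G (a, b) ≤ liminf (fun n => F n (a, bs n)) atTop) :
    (⨅ b : B, ⨆ a : A, (G (a, b) : EReal)) ≤
      liminf (fun n => ⨅ b : B, ⨆ a : A, (F n (a, b) : EReal)) atTop :=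
  infSup_le_liminf_infSup_general F M hFb G hlim
end
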